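/- arXiv:2410.03219 — 3 statements merged into one kernel-verified Lean document; each statement's English description precedes it below -/
import Mathlib

section
/- For m ≥ 2 and d ≥ 1, the quantity (1/d^2) · ∑_{e | d} μ(d/e) · (-1)^{(m-1)(d-e)} · C(me-1, e-1) is a non-negative integer, where μ is the Möbius function and C denotes the binomial coefficient. -/
/-!
Write the sum as `(-1)^((m-1)d) ∑_{e ∣ d} μ(d/e) a(e)` with `a(e) = (-1)^((m-1)e) C(me-1, e-1)`.
Divisibility by `d²` reduces, prime by prime, to the congruence `a(np) ≡ a(n) mod p^(2k)` with
`k = v_p(np)`: the Möbius sum pairs each divisor `e` having `v_p(e) = v_p(d)` with `e/p`.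

For the congruence, cancelling the multiples of `p` in `C(mnp-1, np-1) = ∏_{0<j<np} (mnp-j)/j`
leaves `C(mn-1, n-1) · ∏_{j ∈ J} (mnp-j)/j` with `J = {0 < j < np, p ∤ j}`. Since `p^k ∣ M := mnp`,
modulo `p^(2k)` we have `∏_J (j - M) ≡ ∏_J j - M e(J)`, where `e(J) = ∑_j ∏_{i ≠ j} i`, and
`e(J) ≡ 0 mod p^k` because `j ↦ np - j` pairs its terms. That involution has a fixed point only
when `p = 2` and `n` is odd; then the modulus is `4` and every factor is checked directly.

Nonnegativity: the term `e = d` dominates, since `C(me-1, e-1)` at least doubles from `e` to `e+1`.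
-/

open Finset ArithmeticFunction

lemma cast_choose_pred_eq_prod_Ico {N : ℕ} (hN : 1 ≤ N) (K : ℕ) :
    ((N - 1).choose (K - 1) : ℚ) = ∏ j ∈ Ico 1 K, ((N : ℚ) - j) / j := by
  rw [Nat.cast_choose_eq_descPochhammer_div, descPochhammer_eval_eq_prod_range,
    Nat.factorial_eq_prod_range_add_one, Nat.cast_prod, ← prod_div_distrib,
    prod_Ico_eq_prod_range]
  refine prod_congr rfl fun j _ => ?_
  push_cast [Nat.cast_sub hN]
  ring_nf

def nonmultiples (p N : ℕ) : Finset ℕ := (Ico 1 N).filter (fun j => ¬ p ∣ j)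

lemma mem_nonmultiples {p N j : ℕ} : j ∈ nonmultiples p N ↔ 1 ≤ j ∧ j < N ∧ ¬ p ∣ j := by
  simp [nonmultiples, and_assoc]

lemma Ico_filter_dvd_eq_image {p : ℕ} (hp : 0 < p) (n : ℕ) :
    (Ico 1 (n * p)).filter (p ∣ ·) = (Ico 1 n).image (p * ·) := by
  ext j
  simp only [mem_filter, mem_Ico, mem_image]
  constructor
  · rintro ⟨⟨hj1, hjn⟩, i, rfl⟩
    refine ⟨i, ⟨Nat.pos_of_mul_pos_left hj1, ?_⟩, rfl⟩
    exact Nat.lt_of_mul_lt_mul_left (a := p) (by linarith)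
  · rintro ⟨i, ⟨hi1, hin⟩, rfl⟩
    exact ⟨⟨Nat.mul_pos hp hi1, by nlinarith⟩, dvd_mul_right p i⟩

lemma card_nonmultiples {p : ℕ} (hp : 0 < p) (n : ℕ) : #(nonmultiples p (n * p)) = n * p - n := by
  have h := card_filter_add_card_filter_not (s := Ico 1 (n * p)) (p ∣ ·)
  rw [Ico_filter_dvd_eq_image hp, card_image_of_injective _ (mul_right_injective₀ hp.ne'),
    Nat.card_Ico, Nat.card_Ico] at h
  rw [nonmultiples]
  rcases n.eq_zero_or_pos with rfl | hn
  · simp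
  · have : n ≤ n * p := Nat.le_mul_of_pos_right n hp
    omega

lemma cast_choose_mul_eq_mul_prod_nonmultiples {p m n : ℕ} (hp : 0 < p) (hm : 0 < m)
    (hn : 0 < n) :
    ((m * n * p - 1).choose (n * p - 1) : ℚ) =
      (m * n - 1).choose (n - 1) * ∏ j ∈ nonmultiples p (n * p), ((m * n * p : ℕ) - j : ℚ) / j := by
  have hmn : 1 ≤ m * n := Nat.mul_pos hm hn
  rw [cast_choose_pred_eq_prod_Ico (Nat.mul_pos hmn hp), cast_choose_pred_eq_prod_Ico hmn,
    ← prod_filter_mul_prod_filter_not (Ico 1 (n * p)) (p ∣ ·), Ico_filter_dvd_eq_image hp,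
    prod_image fun _ _ _ _ h => Nat.eq_of_mul_eq_mul_left hp h, nonmultiples]
  congr 1
  refine prod_congr rfl fun i _ => ?_
  have : (p : ℚ) ≠ 0 := by exact_mod_cast hp.ne'
  push_cast
  field_simp

lemma sq_dvd_prod_sub_sub {R ι : Type*} [CommRing R] [DecidableEq ι] (s : Finset ι) (f : ι → R)
    (c : R) : c ^ 2 ∣ ∏ i ∈ s, (f i - c) - (∏ i ∈ s, f i - c * ∑ i ∈ s, ∏ j ∈ s.erase i, f j) := by
  induction s using Finset.induction_on with
  | empty => simp
  | insert a t ha ih =>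
    obtain ⟨q, hq⟩ := ih
    have herase : ∀ i ∈ t, ∏ j ∈ (insert a t).erase i, f j = f a * ∏ j ∈ t.erase i, f j := by
      intro i hi
      rw [erase_insert_of_ne (ne_of_mem_of_not_mem hi ha).symm, prod_insert (by simp [ha])]
    rw [prod_insert ha, prod_insert ha, sum_insert ha, erase_insert ha, sum_congr rfl herase,
      ← mul_sum]
    exact ⟨(f a - c) * q + ∑ i ∈ t, ∏ j ∈ t.erase i, f j, by linear_combination (f a - c) * hq⟩

lemma sum_prod_erase_eq_zero_of_involution {R ι : Type*} [CommRing R] [DecidableEq ι]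
    {s : Finset ι} {f : ι → R} (τ : ι → ι) (hτs : ∀ i ∈ s, τ i ∈ s) (hττ : ∀ i ∈ s, τ (τ i) = i)
    (hτ : ∀ i ∈ s, τ i ≠ i) (hf : ∀ i ∈ s, f i + f (τ i) = 0) :
    ∑ i ∈ s, ∏ j ∈ s.erase i, f j = 0 := by
  refine sum_involution (fun i _ => τ i) (fun i hi => ?_) (fun i hi _ => hτ i hi) hτs hττ
  have h1 : τ i ∈ s.erase i := mem_erase.2 ⟨hτ i hi, hτs i hi⟩
  have h2 : i ∈ s.erase (τ i) := mem_erase.2 ⟨(hτ i hi).symm, hi⟩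
  rw [← mul_prod_erase _ _ h1, ← mul_prod_erase _ _ h2, erase_right_comm (a := τ i)]
  linear_combination (∏ j ∈ (s.erase i).erase (τ i), f j) * hf i hi

lemma sub_mem_nonmultiples {p N j : ℕ} (hpN : p ∣ N) (hj : j ∈ nonmultiples p N) :
    N - j ∈ nonmultiples p N := by
  rw [mem_nonmultiples] at hj ⊢
  obtain ⟨hj1, hjN, hpj⟩ := hj
  refine ⟨by omega, by omega, fun h => hpj ?_⟩
  simpa [Nat.sub_sub_self hjN.le] using Nat.dvd_sub hpN h

lemma sub_ne_self_of_mem_nonmultiples {p n j : ℕ} (hp : p.Prime) (hpn : p ≠ 2 ∨ 2 ∣ n)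
    (hj : j ∈ nonmultiples p (n * p)) : n * p - j ≠ j := by
  rw [mem_nonmultiples] at hj
  obtain ⟨-, hjN, hpj⟩ := hj
  intro h
  have hnp : n * p = 2 * j := by omega
  rcases eq_or_ne p 2 with rfl | hp2
  · have := hpn.resolve_left (not_not.2 rfl)
    exact hpj (by omega)
  · rcases (Nat.Prime.dvd_mul hp).1 (hnp ▸ dvd_mul_left p n) with h2 | h2
    · exact hp2 ((Nat.prime_dvd_prime_iff_eq hp Nat.prime_two).1 h2)
    · exact hpj h2

lemma pow_factorization_dvd_sum_prod_erase {p n : ℕ} (hp : p.Prime) (hpn : p ≠ 2 ∨ 2 ∣ n) :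
    (p : ℤ) ^ (n * p).factorization p ∣
      ∑ j ∈ nonmultiples p (n * p), ∏ i ∈ (nonmultiples p (n * p)).erase j, (i : ℤ) := by
  have : NeZero (p ^ (n * p).factorization p) := ⟨pow_ne_zero _ hp.ne_zero⟩
  rw [← Nat.cast_pow, ← ZMod.intCast_zmod_eq_zero_iff_dvd]
  push_cast
  refine sum_prod_erase_eq_zero_of_involution (n * p - ·)
    (fun j hj => sub_mem_nonmultiples (dvd_mul_left p n) hj) (fun j hj => ?_)
    (fun j hj => sub_ne_self_of_mem_nonmultiples hp hpn hj) (fun j hj => ?_)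
  · have := (mem_nonmultiples.1 hj).2.1
    omega
  · have := (mem_nonmultiples.1 hj).2.1
    rw [← Nat.cast_add, Nat.add_sub_cancel' this.le, ZMod.natCast_eq_zero_iff]
    exact Nat.ordProj_dvd _ _

lemma even_mul_sub_self {p n : ℕ} (hp : p.Prime) (hpn : p ≠ 2 ∨ 2 ∣ n) : Even (n * p - n) := by
  rw [← Nat.mul_sub_one]
  rcases eq_or_ne p 2 with rfl | hp2
  · exact (even_iff_two_dvd.2 (hpn.resolve_left (not_not.2 rfl))).mul_right _
  · exact (hp.even_sub_one hp2).mul_left _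

lemma prod_nonmultiples_sub_modEq_of_ne_two_or_two_dvd {p n : ℕ} (m : ℕ) (hp : p.Prime)
    (hpn : p ≠ 2 ∨ 2 ∣ n) :
    ∏ j ∈ nonmultiples p (n * p), ((m * n * p : ℕ) - j : ℤ) ≡
      ∏ j ∈ nonmultiples p (n * p), (j : ℤ) [ZMOD p ^ (2 * (n * p).factorization p)] := by
  set J := nonmultiples p (n * p)
  set M : ℤ := ((m * n * p : ℕ) : ℤ)
  set E := ∑ j ∈ J, ∏ i ∈ J.erase j, (i : ℤ)
  have hM : (p : ℤ) ^ (n * p).factorization p ∣ M := by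
    rw [← Nat.cast_pow, Int.natCast_dvd_natCast, mul_assoc]
    exact (Nat.ordProj_dvd _ _).trans (dvd_mul_left _ m)
  have hJ : Even #J := by
    rw [card_nonmultiples hp.pos]
    exact even_mul_sub_self hp hpn
  calc ∏ j ∈ J, (M - j) = ∏ j ∈ J, ((j : ℤ) - M) := by
        have hsign : ∏ _j ∈ J, (-1 : ℤ) = 1 := by rw [prod_const, hJ.neg_one_pow]
        rw [← one_mul (∏ j ∈ J, ((j : ℤ) - M)), ← hsign, ← prod_mul_distrib]
        exact prod_congr rfl fun j _ => by ring
    _ ≡ ∏ j ∈ J, (j : ℤ) - M * E [ZMOD p ^ (2 * (n * p).factorization p)] := by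
        refine (Int.modEq_iff_dvd.2 ?_).symm
        rw [pow_mul']
        exact (pow_dvd_pow_of_dvd hM 2).trans (sq_dvd_prod_sub_sub J _ M)
    _ ≡ ∏ j ∈ J, (j : ℤ) - 0 [ZMOD p ^ (2 * (n * p).factorization p)] := by
        refine Int.ModEq.sub_left _ (Int.modEq_zero_iff_dvd.2 ?_)
        rw [two_mul, pow_add]
        exact mul_dvd_mul hM (pow_factorization_dvd_sum_prod_erase hp hpn)
    _ = ∏ j ∈ J, (j : ℤ) := sub_zero _

lemma two_mul_sub_modEq_four {m n j : ℕ} (hm : 0 < m) (hn : Odd n) (hj : Odd j) :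
    ((m * n * 2 : ℕ) - j : ℤ) ≡ (-1) ^ (m - 1) * j [ZMOD 4] := by
  obtain ⟨c, rfl⟩ := hn
  obtain ⟨b, rfl⟩ := hj
  obtain ⟨m, rfl⟩ := Nat.exists_eq_add_of_lt hm
  rw [Int.modEq_iff_dvd]
  rcases Nat.even_or_odd m with ⟨a, rfl⟩ | ⟨a, rfl⟩
  · rw [show 0 + (a + a) + 1 - 1 = a + a by omega, Even.neg_one_pow ⟨a, rfl⟩]
    exact ⟨b - 2 * a * c - a - c, by push_cast; ring⟩
  · rw [show 0 + (2 * a + 1) + 1 - 1 = 2 * a + 1 by omega, Odd.neg_one_pow ⟨a, rfl⟩]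
    exact ⟨-(a + 1) * (2 * c + 1), by push_cast; ring⟩

lemma prod_nonmultiples_two_sub_modEq {m n : ℕ} (hm : 0 < m) (hn : Odd n) :
    ∏ j ∈ nonmultiples 2 (n * 2), ((m * n * 2 : ℕ) - j : ℤ) ≡
      (-1) ^ ((m - 1) * n) * ∏ j ∈ nonmultiples 2 (n * 2), (j : ℤ) [ZMOD 4] := by
  have hcard : #(nonmultiples 2 (n * 2)) = n := by
    rw [card_nonmultiples two_pos]; omega
  calc _ ≡ ∏ j ∈ nonmultiples 2 (n * 2), ((-1) ^ (m - 1) * j : ℤ) [ZMOD 4] :=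
        Int.ModEq.prod fun j hj => two_mul_sub_modEq_four hm hn
          (Nat.odd_iff.2 (Nat.two_dvd_ne_zero.1 (mem_nonmultiples.1 hj).2.2))
    _ = _ := by rw [prod_mul_distrib, prod_const, hcard, pow_mul]

lemma prod_nonmultiples_sub_modEq {p m n : ℕ} (hp : p.Prime) (hm : 0 < m) :
    ∏ j ∈ nonmultiples p (n * p), ((m * n * p : ℕ) - j : ℤ) ≡
      (-1) ^ ((m - 1) * (n * p - n)) * ∏ j ∈ nonmultiples p (n * p), (j : ℤ)
        [ZMOD p ^ (2 * (n * p).factorization p)] := by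
  by_cases hpn : p ≠ 2 ∨ 2 ∣ n
  · rw [((even_mul_sub_self hp hpn).mul_left _).neg_one_pow, one_mul]
    exact prod_nonmultiples_sub_modEq_of_ne_two_or_two_dvd m hp hpn
  · obtain ⟨rfl, hn⟩ : p = 2 ∧ ¬ 2 ∣ n := by simpa using hpn
    have hv : (n * 2).factorization 2 = 1 := by
      rw [Nat.factorization_mul (by omega) two_ne_zero, Finsupp.add_apply,
        Nat.factorization_eq_zero_of_not_dvd hn, Nat.Prime.factorization_self Nat.prime_two]
    rw [hv, show n * 2 - n = n by omega]
    exact prod_nonmultiples_two_sub_modEq hm (Nat.odd_iff.2 (Nat.two_dvd_ne_zero.1 hn))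

lemma choose_mul_modEq {p m n : ℕ} (hp : p.Prime) (hm : 0 < m) (hn : 0 < n) :
    ((m * n * p - 1).choose (n * p - 1) : ℤ) ≡
      (-1) ^ ((m - 1) * (n * p - n)) * (m * n - 1).choose (n - 1)
        [ZMOD p ^ (2 * (n * p).factorization p)] := by
  set J := nonmultiples p (n * p)
  have hJ0 : ∀ j ∈ J, j ≠ 0 := fun j hj => by have := (mem_nonmultiples.1 hj).1; omega
  have hid : ((m * n * p - 1).choose (n * p - 1) : ℤ) * ∏ j ∈ J, (j : ℤ) =
      (m * n - 1).choose (n - 1) * ∏ j ∈ J, ((m * n * p : ℕ) - j : ℤ) := by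
    have hA : ∏ j ∈ J, (j : ℚ) ≠ 0 := prod_ne_zero_iff.2 fun j hj => by exact_mod_cast hJ0 j hj
    have := cast_choose_mul_eq_mul_prod_nonmultiples hp.pos hm hn
    rw [prod_div_distrib, mul_div_assoc', eq_div_iff hA] at this
    refine Int.cast_injective (α := ℚ) ?_
    push_cast at this ⊢
    exact this
  have hcop : IsCoprime ((p : ℤ) ^ (2 * (n * p).factorization p)) (∏ j ∈ J, (j : ℤ)) :=
    IsCoprime.pow_left (IsCoprime.prod_right fun j hj => Nat.isCoprime_iff_coprime.2
      ((Nat.Prime.coprime_iff_not_dvd hp).2 (mem_nonmultiples.1 hj).2.2))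
  refine Int.modEq_iff_dvd.2 (hcop.dvd_of_dvd_mul_right ?_)
  obtain ⟨c, hc⟩ := Int.modEq_iff_dvd.1 (prod_nonmultiples_sub_modEq (n := n) hp hm)
  exact ⟨(m * n - 1).choose (n - 1) * c,
    by linear_combination (m * n - 1).choose (n - 1) * hc - hid⟩

def signedLoopBinomial (m e : ℕ) : ℤ := (-1) ^ ((m - 1) * e) * ((m * e - 1).choose (e - 1) : ℤ)

lemma signedLoopBinomial_mul_modEq {p m : ℕ} (hp : p.Prime) (hm : 0 < m) (n : ℕ) :
    signedLoopBinomial m (n * p) ≡ signedLoopBinomial m n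
      [ZMOD p ^ (2 * (n * p).factorization p)] := by
  rcases n.eq_zero_or_pos with rfl | hn
  · simp
  obtain ⟨t, ht⟩ := Nat.exists_eq_add_of_le (Nat.le_mul_of_pos_right n hp.pos)
  have hsign : ((-1 : ℤ) ^ ((m - 1) * (n * p))) * (-1) ^ ((m - 1) * (n * p - n)) =
      (-1) ^ ((m - 1) * n) := by
    rw [← pow_add, ht, Nat.add_sub_cancel_left,
      show (m - 1) * (n + t) + (m - 1) * t = (m - 1) * n + 2 * ((m - 1) * t) by ring,
      pow_add, (even_two_mul _).neg_one_pow, mul_one]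
  unfold signedLoopBinomial
  rw [← hsign, mul_assoc, ← mul_assoc m n p]
  exact (choose_mul_modEq hp hm hn).mul_left _

lemma dvd_sum_divisors_moebius_mul {M : ℤ} {d p : ℕ} (hp : p.Prime) (hpd : p ∣ d) {g : ℕ → ℤ}
    (hg : ∀ k ∈ d.divisors, ¬ p ∣ k → M ∣ g k - g (p * k)) :
    M ∣ ∑ k ∈ d.divisors, moebius k * g k := by
  set D := d.divisors
  have hmul : ∀ k ∈ D.filter (¬ p ∣ ·), p * k ∈ D.filter (p ∣ ·) := by
    intro k hk
    simp only [D, mem_filter, Nat.mem_divisors] at hk ⊢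
    exact ⟨⟨Nat.Coprime.mul_dvd_of_dvd_of_dvd ((Nat.Prime.coprime_iff_not_dvd hp).2 hk.2)
      hpd hk.1.1, hk.1.2⟩, dvd_mul_right p k⟩
  have hzero : ∀ k ∈ D.filter (p ∣ ·), k ∉ (D.filter (¬ p ∣ ·)).image (p * ·) →
      moebius k * g k = 0 := by
    intro k hk hk'
    obtain ⟨hkD, l, rfl⟩ := mem_filter.1 hk
    have hpl : p ∣ l := by
      by_contra hpl
      refine hk' (mem_image.2 ⟨l, mem_filter.2 ⟨?_, hpl⟩, rfl⟩)
      exact Nat.mem_divisors.2 ⟨(Dvd.intro_left p rfl).trans (Nat.dvd_of_mem_divisors hkD),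
        (Nat.mem_divisors.1 hkD).2⟩
    rw [moebius_eq_zero_of_not_squarefree fun h => hp.one_lt.ne' (Nat.isUnit_iff.1
      (h p (mul_dvd_mul_left p hpl))), zero_mul]
  have hmoebius : ∀ k ∈ D.filter (¬ p ∣ ·), moebius (p * k) = -moebius k := fun k hk => by
    rw [isMultiplicative_moebius.map_mul_of_coprime
      ((Nat.Prime.coprime_iff_not_dvd hp).2 (mem_filter.1 hk).2), moebius_apply_prime hp,
      neg_one_mul]
  rw [← sum_filter_add_sum_filter_not D (p ∣ ·),
    ← sum_subset (image_subset_iff.2 hmul) hzero,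
    sum_image fun _ _ _ _ h => Nat.eq_of_mul_eq_mul_left hp.pos h,
    sum_congr rfl fun k hk => by rw [hmoebius k hk], ← sum_add_distrib]
  refine dvd_sum fun k hk => ?_
  rw [show -moebius k * g (p * k) + moebius k * g k = moebius k * (g k - g (p * k)) by ring]
  exact dvd_mul_of_dvd_right (hg k (mem_filter.1 hk).1 (mem_filter.1 hk).2) _

lemma natCast_dvd_of_forall_prime_pow_dvd {n : ℕ} (hn : n ≠ 0) {N : ℤ}
    (h : ∀ p : ℕ, p.Prime → (p : ℤ) ^ n.factorization p ∣ N) : (n : ℤ) ∣ N := by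
  refine Int.natCast_dvd.2 ((Nat.dvd_iff_prime_pow_dvd_dvd _ _).2 fun p k hp hpk => ?_)
  refine (pow_dvd_pow p ((hp.pow_dvd_iff_le_factorization hn).1 hpk)).trans ?_
  exact Int.natCast_dvd.1 (by exact_mod_cast h p hp)

lemma pow_dvd_sum_divisors_moebius_mul {a : ℕ → ℤ} {r : ℕ}
    (ha : ∀ p n : ℕ, p.Prime → a (n * p) ≡ a n [ZMOD p ^ (r * (n * p).factorization p)])
    {d : ℕ} (hd : d ≠ 0) : (d : ℤ) ^ r ∣ ∑ e ∈ d.divisors, moebius (d / e) * a e := by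
  have hsum : ∑ e ∈ d.divisors, moebius (d / e) * a e =
      ∑ k ∈ d.divisors, moebius k * a (d / k) := by
    rw [← Nat.sum_div_divisors d]
    exact sum_congr rfl fun e he => by rw [Nat.div_div_self (Nat.dvd_of_mem_divisors he) hd]
  rw [hsum, ← Nat.cast_pow]
  refine natCast_dvd_of_forall_prime_pow_dvd (pow_ne_zero r hd) fun p hp => ?_
  rw [Nat.factorization_pow, Finsupp.smul_apply, smul_eq_mul]
  by_cases hpd : p ∣ d
  · refine dvd_sum_divisors_moebius_mul hp hpd fun k hk hpk => ?_
    obtain ⟨hkd, -⟩ := Nat.mem_divisors.1 hk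
    obtain ⟨n, rfl⟩ := Nat.Coprime.mul_dvd_of_dvd_of_dvd
      ((Nat.Prime.coprime_iff_not_dvd hp).2 hpk) hpd hkd
    have hk : 0 < k := Nat.pos_of_ne_zero (by rintro rfl; simp at hd)
    have hn0 : n ≠ 0 := by rintro rfl; simp at hd
    have hd' : p * k * n = k * (n * p) := by ring
    have hv : (p * k * n).factorization p = (n * p).factorization p := by
      rw [hd', Nat.factorization_mul hk.ne' (Nat.mul_ne_zero hn0 hp.ne_zero), Finsupp.add_apply,
        Nat.factorization_eq_zero_of_not_dvd hpk, zero_add]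
    rw [hd', Nat.mul_div_cancel_left _ hk, ← hd', Nat.mul_div_cancel_left _ (Nat.mul_pos hp.pos hk),
      hv]
    exact (ha p n hp).symm.dvd
  · rw [Nat.factorization_eq_zero_of_not_dvd hpd, mul_zero, pow_zero]
    exact one_dvd _

lemma two_mul_choose_le {m e : ℕ} (hm : 2 ≤ m) (he : 0 < e) :
    2 * (m * e - 1).choose (e - 1) ≤ (m * (e + 1) - 1).choose e := by
  have hme : 1 ≤ m * e := Nat.mul_pos (by omega) he
  have h1 : m * e * (m * e - 1).choose (e - 1) = (m * e).choose e * e := by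
    have := Nat.add_one_mul_choose_eq (m * e - 1) (e - 1)
    rwa [Nat.sub_add_cancel hme, Nat.sub_add_cancel he] at this
  calc 2 * (m * e - 1).choose (e - 1) ≤ m * (m * e - 1).choose (e - 1) :=
        Nat.mul_le_mul_right _ hm
    _ = (m * e).choose e := Nat.eq_of_mul_eq_mul_right he (by rw [← h1]; ring)
    _ ≤ (m * (e + 1) - 1).choose e := Nat.choose_le_choose e (by rw [mul_add]; omega)

lemma sum_Ico_choose_le {m : ℕ} (hm : 2 ≤ m) (d : ℕ) :
    ∑ e ∈ Ico 1 d, (m * e - 1).choose (e - 1) ≤ (m * d - 1).choose (d - 1) := by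
  induction d with
  | zero => simp
  | succ d ih =>
    rcases d.eq_zero_or_pos with rfl | hd
    · simp
    rw [sum_Ico_succ_top (show 1 ≤ d from hd), Nat.add_sub_cancel]
    have := two_mul_choose_le hm hd
    omega

lemma sum_divisors_moebius_mul_nonneg {d : ℕ} (hd : d ≠ 0) {f : ℕ → ℤ}
    (hf : ∑ e ∈ d.properDivisors, |f e| ≤ f d) :
    0 ≤ ∑ e ∈ d.divisors, moebius (d / e) * f e := by
  rw [← Nat.insert_self_properDivisors hd, sum_insert Nat.self_notMem_properDivisors,
    Nat.div_self (Nat.pos_of_ne_zero hd), moebius_apply_one, one_mul]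
  have hterm : ∀ e, -|f e| ≤ moebius (d / e) * f e := fun e => by
    refine (neg_le_neg ?_).trans (neg_abs_le _)
    rw [abs_mul]
    exact mul_le_of_le_one_left (abs_nonneg _) abs_moebius_le_one
  have := sum_le_sum fun e (_ : e ∈ d.properDivisors) => hterm e
  rw [sum_neg_distrib] at this
  linarith

lemma neg_one_pow_mul_sub {e d : ℕ} (k : ℕ) (hed : e ≤ d) :
    (-1 : ℤ) ^ (k * (d - e)) = (-1) ^ (k * d) * (-1) ^ (k * e) := by
  obtain ⟨t, rfl⟩ := Nat.exists_eq_add_of_le hed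
  rw [Nat.add_sub_cancel_left, mul_add, pow_add, mul_right_comm, ← pow_add, ← two_mul,
    (even_two_mul _).neg_one_pow, one_mul]

def dtNumerator (m d : ℕ) : ℤ :=
  ∑ e ∈ d.divisors,
    moebius (d / e) * ((-1) ^ ((m - 1) * (d - e)) * ((m * e - 1).choose (e - 1) : ℤ))

lemma sq_dvd_dtNumerator {m d : ℕ} (hm : 0 < m) (hd : d ≠ 0) : (d : ℤ) ^ 2 ∣ dtNumerator m d := by
  have h : dtNumerator m d =
      (-1) ^ ((m - 1) * d) * ∑ e ∈ d.divisors, moebius (d / e) * signedLoopBinomial m e := by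
    rw [dtNumerator, mul_sum]
    refine sum_congr rfl fun e he => ?_
    rw [neg_one_pow_mul_sub _ (Nat.divisor_le he), signedLoopBinomial]
    ring
  rw [h]
  exact dvd_mul_of_dvd_right (pow_dvd_sum_divisors_moebius_mul
    (fun p n hp => signedLoopBinomial_mul_modEq hp hm n) hd) _

lemma dtNumerator_nonneg {m d : ℕ} (hm : 2 ≤ m) (hd : d ≠ 0) : 0 ≤ dtNumerator m d := by
  refine sum_divisors_moebius_mul_nonneg hd ?_
  simp only [abs_mul, abs_pow, abs_neg, abs_one, one_pow, one_mul, Nat.abs_cast, Nat.sub_self,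
    mul_zero, pow_zero]
  exact_mod_cast (sum_le_sum_of_subset (filter_subset _ _)).trans (sum_Ico_choose_le hm d)

/-- For m ≥ 2 and d ≥ 1, the quantity
(1/d²) · ∑_{e | d} μ(d/e) · (-1)^{(m-1)(d-e)} · C(me-1, e-1) is a non-negative integer. -/
theorem dt_loop_quiver_value_at_one_is_nonneg_integer (m d : ℕ) (hm : 2 ≤ m) (hd : 1 ≤ d) :
    ∃ n : ℕ, (n : ℚ) =
      (1 / (d : ℚ) ^ 2) *
        ∑ e ∈ d.divisors,
          ((ArithmeticFunction.moebius (d / e) : ℤ) : ℚ) * (-1) ^ ((m - 1) * (d - e)) *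
            (Nat.choose (m * e - 1) (e - 1) : ℚ) := by
  have hd0 : d ≠ 0 := Nat.one_le_iff_ne_zero.1 hd
  obtain ⟨c, hc⟩ := sq_dvd_dtNumerator (by omega : 0 < m) hd0
  have hc0 : 0 ≤ c := nonneg_of_mul_nonneg_right (hc ▸ dtNumerator_nonneg hm hd0) (by positivity)
  refine ⟨c.toNat, ?_⟩
  have hsum : ∑ e ∈ d.divisors, ((moebius (d / e) : ℤ) : ℚ) * (-1) ^ ((m - 1) * (d - e)) *
      ((m * e - 1).choose (e - 1) : ℚ) = (dtNumerator m d : ℚ) := by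
    push_cast [dtNumerator]
    exact sum_congr rfl fun e _ => mul_assoc _ _ _
  have hcq : ((c.toNat : ℕ) : ℚ) = c := by exact_mod_cast Int.toNat_of_nonneg hc0
  have hdq : (d : ℚ) ≠ 0 := by exact_mod_cast hd0
  rw [hsum, hc, hcq]
  push_cast
  field_simp
end

section
/- The polynomial functions Tr(X), Tr(X^2), Tr(Y), Tr(Y^2), Tr(XY) on pairs (X,Y) of complex 2×2 matrices are algebraically independent over C. -/
open Matrix

/-- The trace map (X,Y) ↦ (Tr X, Tr X², Tr Y, Tr Y², Tr XY) is surjective: an explicit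
preimage for any target `t : Fin 5 → ℂ`, using one complex square root. -/
lemma traces_surjective (t : Fin 5 → ℂ) :
    ∃ s : Matrix (Fin 2) (Fin 2) ℂ × Matrix (Fin 2) (Fin 2) ℂ,
      (s.1).trace = t 0 ∧ (s.1 * s.1).trace = t 1 ∧ (s.2).trace = t 2 ∧
      (s.2 * s.2).trace = t 3 ∧ (s.1 * s.2).trace = t 4 := by
  obtain ⟨z, hz⟩ := IsAlgClosed.exists_pow_nat_eq (2 * t 3 - (t 2) ^ 2) (n := 2) (by norm_num)
  refine ⟨(!![t 0, (t 1 - (t 0) ^ 2) / 2; 1, 0],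
           !![(t 2 + z) / 2, t 4 - t 0 * ((t 2 + z) / 2); 0, t 2 - (t 2 + z) / 2]),
      ?_, ?_, ?_, ?_, ?_⟩ <;>
    simp only [Matrix.mul_fin_two, Matrix.trace_fin_two_of]
  · ring
  · ring
  · ring
  · linear_combination hz / 2
  · ring

/-- The polynomial functions Tr(X), Tr(X²), Tr(Y), Tr(Y²), Tr(XY) on pairs (X,Y)
of complex 2×2 matrices are algebraically independent over ℂ. -/
theorem traces_algebraically_independent :
    AlgebraicIndependent ℂ
      (![fun p => (p.1).trace,
         fun p => (p.1 * p.1).trace,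
         fun p => (p.2).trace,
         fun p => (p.2 * p.2).trace,
         fun p => (p.1 * p.2).trace] :
        Fin 5 → (Matrix (Fin 2) (Fin 2) ℂ × Matrix (Fin 2) (Fin 2) ℂ) → ℂ) := by
  set v : Fin 5 → (Matrix (Fin 2) (Fin 2) ℂ × Matrix (Fin 2) (Fin 2) ℂ) → ℂ :=
    (![fun p => (p.1).trace,
       fun p => (p.1 * p.1).trace,
       fun p => (p.2).trace,
       fun p => (p.2 * p.2).trace,
       fun p => (p.1 * p.2).trace]) with hv
  rw [algebraicIndependent_iff]
  intro p hp
  have key : ∀ t : Fin 5 → ℂ, MvPolynomial.eval t p = 0 := by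
    intro t
    obtain ⟨s, h0, h1, h2, h3, h4⟩ := traces_surjective t
    have hvt : (fun i => v i s) = t := by
      funext i
      fin_cases i <;> simpa [hv]
    have := congrFun hp s
    have heval : (MvPolynomial.aeval v p) s = MvPolynomial.aeval (fun i => v i s) p :=
      MvPolynomial.comp_aeval_apply v (Pi.evalAlgHom ℂ (fun _ => ℂ) s) p
    rw [heval, hvt] at this
    rw [MvPolynomial.aeval_def, Algebra.algebraMap_self, MvPolynomial.eval₂_id] at this
    exact this
  have : p = 0 := MvPolynomial.funext (q := 0) (by simpa using key)
  exact this
end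

section
/- A tuple (a_1,a_2,b_1,b_2,b_3) ∈ N^5 is a break divisor on K_{2,3} if and only if a_1+a_2+b_1+b_2+b_3 = 2 and a_1+a_2+b_k+b_l ≥ 1 for all 1 ≤ k < l ≤ 3. -/
/-- The complete bipartite graph K_{2,3}, with parts {a₁,a₂} and {b₁,b₂,b₃}. -/
def K23 : SimpleGraph (Fin 2 ⊕ Fin 3) where
  Adj v w := v.isLeft ≠ w.isLeft
  symm := ⟨fun _ _ h => Ne.symm h⟩
  loopless := ⟨fun _ h => h rfl⟩

/-- The genus g(Γ') = |E(Γ')| - |V(Γ')| + 1 of a subgraph of K_{2,3}. -/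
noncomputable def subgraphGenus (H : K23.Subgraph) : ℤ :=
  (H.edgeSet.ncard : ℤ) - (H.verts.ncard : ℤ) + 1

/-- A break divisor on K_{2,3}: a function D : V → ℕ of total degree g(Γ) = |E|-|V|+1 whose
restriction to every connected subgraph Γ' has degree at least g(Γ'). -/
noncomputable def IsBreakDivisor (D : Fin 2 ⊕ Fin 3 → ℕ) : Prop :=
  (∑ v, (D v : ℤ)) =
      (K23.edgeSet.ncard : ℤ) - (Fintype.card (Fin 2 ⊕ Fin 3) : ℤ) + 1 ∧
    ∀ H : K23.Subgraph, H.Connected →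
      subgraphGenus H ≤ ∑ v ∈ (Set.toFinite H.verts).toFinset, (D v : ℤ)

/-
A subgraph of K_{2,3} with `a` vertices among the `a`'s and `b` among the `b`'s has at most `ab`
edges, so its genus is at most `(a - 1)(b - 1)`, with equality for induced subgraphs. The 4-cycles
(`a = b = 2`) have genus 1, which gives the stated inequalities. Conversely, given total degree 2
those inequalities say that every `b_m` is at most 1; a connected subgraph with `a ≤ 1` has genus
at most 0, and one with `a = 2` misses only `3 - b` of the `b`'s, so it carries degree at least
`2 - (3 - b) = (a - 1)(b - 1)`.
-/

open Set

theorem Set.ncard_preimage_inl_add_ncard_preimage_inr {α β : Type*} [Finite α] [Finite β]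
    (s : Set (α ⊕ β)) : (Sum.inl ⁻¹' s).ncard + (Sum.inr ⁻¹' s).ncard = s.ncard := by
  rw [← ncard_image_of_injective (Sum.inl ⁻¹' s) Sum.inl_injective,
    ← ncard_image_of_injective (Sum.inr ⁻¹' s) Sum.inr_injective, ← ncard_union_eq,
    image_preimage_eq_inter_range, image_preimage_eq_inter_range, ← inter_union_distrib_left,
    range_inl_union_range_inr, inter_univ]
  exact isCompl_range_inl_range_inr.disjoint.mono (image_subset_range _ _) (image_subset_range _ _)

theorem Sym2.injective_mk_inl_inr {α β : Type*} :
    Function.Injective fun p : α × β => s(Sum.inl p.1, Sum.inr p.2) := by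
  rintro ⟨i, j⟩ ⟨i', j'⟩ h
  simpa [Sym2.eq_iff] using h

namespace SimpleGraph.Subgraph

variable {α β : Type*} {G : SimpleGraph (α ⊕ β)}

theorem edgeSet_subset_image_prod (hG : G ≤ completeBipartiteGraph α β) (H : G.Subgraph) :
    H.edgeSet ⊆ (fun p : α × β => s(Sum.inl p.1, Sum.inr p.2)) ''
      ((Sum.inl ⁻¹' H.verts) ×ˢ (Sum.inr ⁻¹' H.verts)) := by
  intro e he
  induction e using Sym2.ind with
  | _ x y =>
    have hxy := hG (H.adj_sub he)
    rcases x with i | j <;> rcases y with i' | j' <;> simp at hxy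
    · exact ⟨(i, j'), ⟨H.edge_vert he, H.edge_vert he.symm⟩, rfl⟩
    · exact ⟨(i', j), ⟨H.edge_vert he.symm, H.edge_vert he⟩, Sym2.eq_swap⟩

theorem image_prod_subset_edgeSet_induce_top (hG : completeBipartiteGraph α β ≤ G)
    (S : Set (α ⊕ β)) :
    (fun p : α × β => s(Sum.inl p.1, Sum.inr p.2)) '' ((Sum.inl ⁻¹' S) ×ˢ (Sum.inr ⁻¹' S)) ⊆
      ((⊤ : G.Subgraph).induce S).edgeSet := by
  rintro _ ⟨⟨i, j⟩, ⟨hi, hj⟩, rfl⟩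
  exact ⟨hi, hj, hG (by simp)⟩

theorem connected_induce_top (hG : completeBipartiteGraph α β ≤ G) {S : Set (α ⊕ β)} {i : α}
    {j : β} (hi : Sum.inl i ∈ S) (hj : Sum.inr j ∈ S) :
    ((⊤ : G.Subgraph).induce S).Connected := by
  set H := (⊤ : G.Subgraph).induce S
  have reach : ∀ {i' : α} {j' : β} (hi' : Sum.inl i' ∈ S) (hj' : Sum.inr j' ∈ S),
      H.coe.Reachable ⟨_, hi'⟩ ⟨_, hj'⟩ :=
    fun hi' hj' => Adj.reachable (show H.Adj _ _ from ⟨hi', hj', hG (by simp)⟩)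
  have reach_inl : ∀ v (hv : v ∈ S), H.coe.Reachable ⟨_, hi⟩ ⟨v, hv⟩ := by
    rintro (i' | j') hv
    · exact (reach hi hj).trans (reach hv hj).symm
    · exact reach hi hv
  rw [Subgraph.connected_iff]
  exact ⟨⟨fun ⟨v, hv⟩ ⟨w, hw⟩ => (reach_inl v hv).symm.trans (reach_inl w hw)⟩, ⟨_, hi⟩⟩

variable [Finite α] [Finite β]

theorem ncard_edgeSet_le (hG : G ≤ completeBipartiteGraph α β) (H : G.Subgraph) :
    H.edgeSet.ncard ≤ (Sum.inl ⁻¹' H.verts).ncard * (Sum.inr ⁻¹' H.verts).ncard :=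
  calc H.edgeSet.ncard ≤ _ := ncard_le_ncard (edgeSet_subset_image_prod hG H) (toFinite _)
    _ ≤ _ := ncard_image_le (toFinite _)
    _ = _ := ncard_prod

theorem mul_le_ncard_edgeSet_induce_top (hG : completeBipartiteGraph α β ≤ G)
    (S : Set (α ⊕ β)) :
    (Sum.inl ⁻¹' S).ncard * (Sum.inr ⁻¹' S).ncard ≤ ((⊤ : G.Subgraph).induce S).edgeSet.ncard :=
  calc _ = _ := ncard_prod.symm
    _ = _ := (ncard_image_of_injective _ Sym2.injective_mk_inl_inr).symm
    _ ≤ _ := ncard_le_ncard (image_prod_subset_edgeSet_induce_top hG S) (toFinite _)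

theorem ncard_edgeSet_induce_top (hG : G = completeBipartiteGraph α β) (S : Set (α ⊕ β)) :
    ((⊤ : G.Subgraph).induce S).edgeSet.ncard = (Sum.inl ⁻¹' S).ncard * (Sum.inr ⁻¹' S).ncard :=
  (ncard_edgeSet_le hG.le _).antisymm (mul_le_ncard_edgeSet_induce_top hG.ge S)

end SimpleGraph.Subgraph

open SimpleGraph Subgraph

theorem K23_eq_completeBipartiteGraph : K23 = completeBipartiteGraph (Fin 2) (Fin 3) := by
  ext (_ | _) (_ | _) <;> simp [K23]

theorem subgraphGenus_eq_sub_ncard_preimage (H : K23.Subgraph) :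
    subgraphGenus H = H.edgeSet.ncard -
      ((Sum.inl ⁻¹' H.verts).ncard + (Sum.inr ⁻¹' H.verts).ncard : ℤ) + 1 := by
  rw [subgraphGenus, ← ncard_preimage_inl_add_ncard_preimage_inr H.verts]
  push_cast; rfl

theorem subgraphGenus_le (H : K23.Subgraph) :
    subgraphGenus H ≤
      ((Sum.inl ⁻¹' H.verts).ncard - 1 : ℤ) * ((Sum.inr ⁻¹' H.verts).ncard - 1) := by
  have hE : (H.edgeSet.ncard : ℤ) ≤ (Sum.inl ⁻¹' H.verts).ncard * (Sum.inr ⁻¹' H.verts).ncard :=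
    mod_cast ncard_edgeSet_le K23_eq_completeBipartiteGraph.le H
  rw [subgraphGenus_eq_sub_ncard_preimage]
  linarith

theorem subgraphGenus_induce_top (S : Set (Fin 2 ⊕ Fin 3)) :
    subgraphGenus ((⊤ : K23.Subgraph).induce S) =
      ((Sum.inl ⁻¹' S).ncard - 1 : ℤ) * ((Sum.inr ⁻¹' S).ncard - 1) := by
  rw [subgraphGenus_eq_sub_ncard_preimage, ncard_edgeSet_induce_top K23_eq_completeBipartiteGraph,
    induce_verts]
  push_cast
  ring

theorem K23_edgeSet_ncard : K23.edgeSet.ncard = 6 := by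
  rw [← Subgraph.edgeSet_top, ← induce_self_verts (G' := (⊤ : K23.Subgraph)), verts_top,
    ncard_edgeSet_induce_top K23_eq_completeBipartiteGraph]
  simp

theorem isBreakDivisor_iff (D : Fin 2 ⊕ Fin 3 → ℕ) :
    IsBreakDivisor D ↔ ∑ v, D v = 2 ∧ ∀ H : K23.Subgraph, H.Connected →
      subgraphGenus H ≤ ∑ v ∈ (toFinite H.verts).toFinset, (D v : ℤ) := by
  rw [IsBreakDivisor, K23_edgeSet_ncard, ← Nat.cast_sum]
  refine Iff.and ?_ Iff.rfl
  simp only [Fintype.card_sum, Fintype.card_fin]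
  omega

def fourCycle (k l : Fin 3) : K23.Subgraph :=
  (⊤ : K23.Subgraph).induce {Sum.inl 0, Sum.inl 1, Sum.inr k, Sum.inr l}

theorem fourCycle_connected (k l : Fin 3) : (fourCycle k l).Connected :=
  connected_induce_top K23_eq_completeBipartiteGraph.ge (i := 0) (j := k) (by simp) (by simp)

theorem subgraphGenus_fourCycle {k l : Fin 3} (hkl : k ≠ l) :
    subgraphGenus (fourCycle k l) = 1 := by
  have hL : Sum.inl ⁻¹' ({Sum.inl 0, Sum.inl 1, Sum.inr k, Sum.inr l} : Set (Fin 2 ⊕ Fin 3)) =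
      univ := by
    ext i; fin_cases i <;> simp
  have hR : Sum.inr ⁻¹' ({Sum.inl 0, Sum.inl 1, Sum.inr k, Sum.inr l} : Set (Fin 2 ⊕ Fin 3)) =
      {k, l} := by
    ext j; simp
  rw [fourCycle, subgraphGenus_induce_top, hL, hR, ncard_univ, ncard_pair hkl]
  norm_num

theorem sum_verts_fourCycle {k l : Fin 3} (hkl : k ≠ l) (D : Fin 2 ⊕ Fin 3 → ℕ) :
    ∑ v ∈ (toFinite (fourCycle k l).verts).toFinset, (D v : ℤ) =
      (D (Sum.inl 0) + D (Sum.inl 1) + D (Sum.inr k) + D (Sum.inr l) : ℕ) := by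
  have hV : (toFinite (fourCycle k l).verts).toFinset =
      {Sum.inl 0, Sum.inl 1, Sum.inr k, Sum.inr l} := by
    ext v; simp [fourCycle]
  rw [hV, Finset.sum_insert (by simp), Finset.sum_insert (by simp),
    Finset.sum_insert (by simp [hkl]), Finset.sum_singleton]
  push_cast; ring

theorem apply_inr_le_one {D : Fin 2 ⊕ Fin 3 → ℕ} (hD : ∑ v, D v = 2)
    (hcyc : ∀ k l : Fin 3, k < l →
      1 ≤ D (Sum.inl 0) + D (Sum.inl 1) + D (Sum.inr k) + D (Sum.inr l))
    (m : Fin 3) : D (Sum.inr m) ≤ 1 := by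
  have h01 := hcyc 0 1 (by decide)
  have h02 := hcyc 0 2 (by decide)
  have h12 := hcyc 1 2 (by decide)
  simp only [Fintype.sum_sum_type, Fin.sum_univ_two, Fin.sum_univ_three] at hD
  fin_cases m <;> simp <;> omega

theorem ncard_preimage_sub_one_mul_le_sum {D : Fin 2 ⊕ Fin 3 → ℕ} (hD : ∑ v, D v = 2)
    (hinr : ∀ m, D (Sum.inr m) ≤ 1) {S : Set (Fin 2 ⊕ Fin 3)} (hS : S.Nonempty) :
    ((Sum.inl ⁻¹' S).ncard - 1 : ℤ) * ((Sum.inr ⁻¹' S).ncard - 1) ≤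
      ∑ v ∈ (toFinite S).toFinset, (D v : ℤ) := by
  have hV := ncard_preimage_inl_add_ncard_preimage_inr S
  have hS0 : 0 < S.ncard := (ncard_pos (toFinite S)).mpr hS
  have ha2 : (Sum.inl ⁻¹' S).ncard ≤ 2 := by simpa using ncard_le_card (Sum.inl ⁻¹' S)
  have hb3 : (Sum.inr ⁻¹' S).ncard ≤ 3 := by simpa using ncard_le_card (Sum.inr ⁻¹' S)
  obtain ha | ha | ha : (Sum.inl ⁻¹' S).ncard = 0 ∨ (Sum.inl ⁻¹' S).ncard = 1 ∨
      (Sum.inl ⁻¹' S).ncard = 2 := by omega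
  iterate 2
    have hsum :=
      Finset.sum_nonneg fun v (_ : v ∈ (toFinite S).toFinset) => Int.natCast_nonneg (D v)
    rw [ha]; push_cast; omega
  · have hinl : Sum.inl ⁻¹' S = univ := (eq_univ_iff_ncard _).mpr (by simpa using ha)
    set s := (toFinite S).toFinset
    have hs : s.card = S.ncard := (ncard_eq_toFinset_card S).symm
    have hcompl : ∑ v ∈ sᶜ, (D v : ℤ) ≤ sᶜ.card := by
      have := Finset.sum_le_card_nsmul sᶜ (fun v => (D v : ℤ)) 1 ?_
      · simpa using this
      rintro (i | m) hv
      · simp only [s, Finset.mem_compl, Finite.mem_toFinset] at hv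
        exact absurd (eq_univ_iff_forall.mp hinl i) hv
      · exact_mod_cast hinr m
    have hcard := Finset.card_add_card_compl s
    have htotal := Finset.sum_add_sum_compl s (fun v => (D v : ℤ))
    have hD' : ∑ v, (D v : ℤ) = 2 := by exact_mod_cast hD
    simp only [Fintype.card_sum, Fintype.card_fin] at hcard
    rw [ha]
    push_cast
    omega

/-- A tuple (a₁,a₂,b₁,b₂,b₃) ∈ ℕ⁵ is a break divisor on K_{2,3} if and only if
a₁+a₂+b₁+b₂+b₃ = 2 and a₁+a₂+b_k+b_l ≥ 1 for all 1 ≤ k < l ≤ 3. -/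
theorem break_divisor_iff_K23 (D : Fin 2 ⊕ Fin 3 → ℕ) :
    IsBreakDivisor D ↔
      ((∑ v, D v) = 2 ∧
        ∀ k l : Fin 3, k < l →
          1 ≤ D (Sum.inl 0) + D (Sum.inl 1) + D (Sum.inr k) + D (Sum.inr l)) := by
  rw [isBreakDivisor_iff]
  refine and_congr_right fun hD => ⟨fun h k l hkl => ?_, fun hcyc H hH => ?_⟩
  · have h := h (fourCycle k l) (fourCycle_connected k l)
    rw [subgraphGenus_fourCycle hkl.ne, sum_verts_fourCycle hkl.ne] at h
    exact_mod_cast h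
  · exact (subgraphGenus_le H).trans
      (ncard_preimage_sub_one_mul_le_sum hD (apply_inr_le_one hD hcyc) hH.nonempty)
end
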